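/- Let (M,d) be a compact metric space, L > 0, and let S be a set of L-Lipschitz curves ℝ → M, equipped with the metric ρ. Let τ: S → ℝ be continuous with respect to ρ, and define P: S → curves by P(γ)(t) = γ(t + τ(γ)). Then P is continuous with respect to ρ: if γₙ → γ in (S,ρ), then ρ(P(γₙ), P(γ)) → 0. -/

import Mathlib

open Filter

/-- The metric `ρ` on the space of curves `ℝ → M`. -/
noncomputable def rho {M : Type*} [PseudoMetricSpace M] (γ₁ γ₂ : ℝ → M) : ℝ :=
  ∑' i : ℤ, (2 : ℝ) ^ (-|i|) * ∫ t in (i : ℝ)..((i : ℝ) + 1), dist (γ₁ t) (γ₂ t)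

/-- The time-one shift on curves: `F₁(γ)(t) = γ(t + 1)`. -/
def timeOneShift {M : Type*} (γ : ℝ → M) : ℝ → M := fun t => γ (t + 1)

/-- A curve `γ : ℝ → M` is `L`-Lipschitz. -/
def LipschitzCurve {M : Type*} [PseudoMetricSpace M] (L : ℝ) (γ : ℝ → M) : Prop :=
  ∀ s t : ℝ, dist (γ s) (γ t) ≤ L * |s - t|

/-- `E` is an `(n, ε)`-dense subset of `F` for the map `f` and the distance `d`:
`E ⊆ F` and the dynamical balls `{y | d_n^f(x,y) < ε}`, `x ∈ E`, cover `F`. -/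
def IsDynCover {X : Type*} (d : X → X → ℝ) (f : X → X) (F : Set X) (ε : ℝ) (n : ℕ)
    (E : Finset X) : Prop :=
  ↑E ⊆ F ∧ ∀ y ∈ F, ∃ x ∈ E, ∀ i < n, d (f^[i] x) (f^[i] y) < ε

/-- `S_d(f, ε, n)`: the minimal cardinality of an `(n, ε)`-dense subset of `F`. -/
noncomputable def coverCard {X : Type*} (d : X → X → ℝ) (f : X → X) (F : Set X) (ε : ℝ)
    (n : ℕ) : ℕ∞ :=
  ⨅ (E : Finset X) (_ : IsDynCover d f F ε n E), (E.card : ℕ∞)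

/-- The topological entropy of `f` on `F`, w.r.t. the distance `d`:
`h(f) = lim_{ε → 0⁺} limsup_{n → ∞} (1/n) log S_d(f, ε, n)`; since the inner rate is
antitone in `ε`, the limit is realized as the supremum over `ε > 0`. -/
noncomputable def topEntropy {X : Type*} (d : X → X → ℝ) (f : X → X) (F : Set X) : EReal :=
  ⨆ (ε : ℝ) (_ : (0 : ℝ) < ε),
    atTop.limsup fun n : ℕ => ENNReal.log (coverCard d f F ε n) / (n : EReal)


/-! Put `s = τ γₙ`. By the triangle inequality,
`ρ(Pγₙ, Pγ) ≤ ρ(γₙ(· + s), γ(· + s)) + ρ(γ(· + s), γ(· + τ γ))`.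
Translation by `s` carries each window `[i, i + 1]` into `[i + ⌊s⌋, i + ⌊s⌋ + 2]`, and
`2^{-|i|} ≤ 2^{|m|} 2^{-|i + m|}`, so the first term is at most `2^{N+2} ρ(γₙ, γ)` once `|s| ≤ N`.
The second is at most `L |s - τ γ| ∑ 2^{-|i|}` by the Lipschitz bound. Since `τ γₙ → τ γ`,
`s` stays bounded and both terms tend to `0`. Compactness of `M` is what makes every
`ρ`-series summable, so that these comparisons of `tsum`s are not about junk values. -/

section Weights

lemma summable_two_zpow_neg_abs : Summable fun i : ℤ => (2 : ℝ) ^ (-|i|) := by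
  have hgeom : Summable fun n : ℕ => (2⁻¹ : ℝ) ^ n :=
    summable_geometric_of_lt_one (by norm_num) (by norm_num)
  refine Summable.of_nat_of_neg ?_ ?_ <;>
    simpa [zpow_neg, ← inv_zpow, abs_of_nonneg] using hgeom

lemma two_zpow_neg_abs_le (N : ℕ) {m : ℤ} (hm : |m| ≤ N) (i : ℤ) :
    (2 : ℝ) ^ (-|i|) ≤ 2 ^ N * 2 ^ (-|i + m|) := by
  rw [← zpow_natCast, ← zpow_add₀ two_ne_zero]
  apply zpow_le_zpow_right₀ one_le_two
  linarith [abs_add_le i m]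

variable {a : ℤ → ℝ} {N : ℕ} {m : ℤ}

lemma summable_two_zpow_neg_abs_mul_comp_add (ha : ∀ i, 0 ≤ a i)
    (hs : Summable fun i => (2 : ℝ) ^ (-|i|) * a i) (hm : |m| ≤ N) :
    Summable fun i => (2 : ℝ) ^ (-|i|) * a (i + m) := by
  refine Summable.of_nonneg_of_le (fun i => mul_nonneg (by positivity) (ha _))
    (fun i => mul_le_mul_of_nonneg_right (two_zpow_neg_abs_le N hm i) (ha _)) ?_
  simp_rw [mul_assoc]
  exact ((Equiv.addRight m).summable_iff.2 hs).mul_left _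

lemma tsum_two_zpow_neg_abs_mul_comp_add_le (ha : ∀ i, 0 ≤ a i)
    (hs : Summable fun i => (2 : ℝ) ^ (-|i|) * a i) (hm : |m| ≤ N) :
    ∑' i, (2 : ℝ) ^ (-|i|) * a (i + m) ≤ 2 ^ N * ∑' i, (2 : ℝ) ^ (-|i|) * a i := by
  calc ∑' i, (2 : ℝ) ^ (-|i|) * a (i + m)
      ≤ ∑' i, 2 ^ N * ((2 : ℝ) ^ (-|i + m|) * a (i + m)) := by
        refine Summable.tsum_le_tsum (fun i => ?_)
          (summable_two_zpow_neg_abs_mul_comp_add ha hs hm)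
          (((Equiv.addRight m).summable_iff.2 hs).mul_left _)
        rw [← mul_assoc]
        exact mul_le_mul_of_nonneg_right (two_zpow_neg_abs_le N hm i) (ha _)
    _ = 2 ^ N * ∑' i, (2 : ℝ) ^ (-|i|) * a i := by
        rw [tsum_mul_left]
        exact congrArg _ ((Equiv.addRight m).tsum_eq fun i => (2 : ℝ) ^ (-|i|) * a i)

end Weights

section Curves

variable {M : Type*} [PseudoMetricSpace M] {γ₁ γ₂ : ℝ → M}

lemma integral_dist_nonneg (γ₁ γ₂ : ℝ → M) (a : ℝ) :
    0 ≤ ∫ t in a..a + 1, dist (γ₁ t) (γ₂ t) :=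
  intervalIntegral.integral_nonneg (by linarith) fun _ _ => dist_nonneg

lemma integral_dist_le_of_forall_dist_le {c : ℝ} (h : ∀ t, dist (γ₁ t) (γ₂ t) ≤ c) (a : ℝ) :
    ∫ t in a..a + 1, dist (γ₁ t) (γ₂ t) ≤ c := by
  simpa using (le_abs_self _).trans <|
    intervalIntegral.norm_integral_le_of_norm_le_const (a := a) (b := a + 1)
      fun t _ => (Real.norm_of_nonneg dist_nonneg).trans_le (h t)

lemma summable_rho_of_forall_dist_le {c : ℝ} (h : ∀ t, dist (γ₁ t) (γ₂ t) ≤ c) :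
    Summable fun i : ℤ =>
      (2 : ℝ) ^ (-|i|) * ∫ t in (i : ℝ)..(i : ℝ) + 1, dist (γ₁ t) (γ₂ t) := by
  refine Summable.of_norm_bounded (summable_two_zpow_neg_abs.mul_right c) fun i => ?_
  rw [Real.norm_of_nonneg (mul_nonneg (by positivity) (integral_dist_nonneg _ _ _))]
  exact mul_le_mul_of_nonneg_left (integral_dist_le_of_forall_dist_le h _) (by positivity)

lemma rho_le_of_forall_dist_le {c : ℝ} (h : ∀ t, dist (γ₁ t) (γ₂ t) ≤ c) :
    rho γ₁ γ₂ ≤ c * ∑' i : ℤ, (2 : ℝ) ^ (-|i|) := by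
  rw [← tsum_mul_left]
  refine Summable.tsum_le_tsum (fun i => ?_) (summable_rho_of_forall_dist_le h)
    (summable_two_zpow_neg_abs.mul_left c)
  rw [mul_comm c]
  exact mul_le_mul_of_nonneg_left (integral_dist_le_of_forall_dist_le h _) (by positivity)

lemma rho_nonneg (γ₁ γ₂ : ℝ → M) : 0 ≤ rho γ₁ γ₂ :=
  tsum_nonneg fun _ => mul_nonneg (by positivity) (integral_dist_nonneg _ _ _)

lemma rho_comm (γ₁ γ₂ : ℝ → M) : rho γ₁ γ₂ = rho γ₂ γ₁ := by
  simp only [rho, dist_comm]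

end Curves

section BoundedCurves

variable {M : Type*} [PseudoMetricSpace M] [BoundedSpace M] {γ₁ γ₂ γ₃ : ℝ → M}

lemma summable_rho (γ₁ γ₂ : ℝ → M) :
    Summable fun i : ℤ =>
      (2 : ℝ) ^ (-|i|) * ∫ t in (i : ℝ)..(i : ℝ) + 1, dist (γ₁ t) (γ₂ t) :=
  summable_rho_of_forall_dist_le fun t =>
    Metric.dist_le_diam_of_mem BoundedSpace.bounded_univ (Set.mem_univ (γ₁ t)) (Set.mem_univ (γ₂ t))

lemma rho_triangle (h₁ : Continuous γ₁) (h₂ : Continuous γ₂) (h₃ : Continuous γ₃) :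
    rho γ₁ γ₃ ≤ rho γ₁ γ₂ + rho γ₂ γ₃ := by
  rw [rho, rho, rho, ← (summable_rho γ₁ γ₂).tsum_add (summable_rho γ₂ γ₃)]
  refine Summable.tsum_le_tsum (fun i => ?_) (summable_rho _ _)
    ((summable_rho _ _).add (summable_rho _ _))
  rw [← mul_add, ← intervalIntegral.integral_add ((h₁.dist h₂).intervalIntegrable _ _)
    ((h₂.dist h₃).intervalIntegrable _ _)]
  refine mul_le_mul_of_nonneg_left ?_ (by positivity)
  exact intervalIntegral.integral_mono_on (by linarith) ((h₁.dist h₃).intervalIntegrable _ _)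
    (((h₁.dist h₂).add (h₂.dist h₃)).intervalIntegrable _ _) fun t _ => dist_triangle _ _ _

lemma abs_floor_le_of_abs_le {s : ℝ} {N : ℕ} (hs : |s| ≤ N) : |⌊s⌋| ≤ N := by
  have hle : (⌊s⌋ : ℝ) ≤ N := (Int.floor_le s).trans (le_of_abs_le hs)
  have hgt : -(N : ℝ) - 1 < ⌊s⌋ := by linarith [Int.sub_one_lt_floor s, neg_abs_le s]
  have hle' : ⌊s⌋ ≤ (N : ℤ) := by exact_mod_cast hle
  have hgt' : -(N : ℤ) - 1 < ⌊s⌋ := by exact_mod_cast hgt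
  rw [abs_le]
  omega

lemma rho_comp_add_right_le (h₁ : Continuous γ₁) (h₂ : Continuous γ₂) {N : ℕ} {s : ℝ}
    (hs : |s| ≤ N) :
    rho (fun t => γ₁ (t + s)) (fun t => γ₂ (t + s)) ≤ 2 ^ (N + 2) * rho γ₁ γ₂ := by
  set a : ℤ → ℝ := fun j => ∫ t in (j : ℝ)..(j : ℝ) + 1, dist (γ₁ t) (γ₂ t) with ha_def
  set k := ⌊s⌋
  have ha : ∀ j, 0 ≤ a j := fun j => integral_dist_nonneg _ _ _
  have hsum : Summable fun j => (2 : ℝ) ^ (-|j|) * a j := summable_rho γ₁ γ₂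
  have hk : |k| ≤ N := abs_floor_le_of_abs_le hs
  have hk' : |k + 1| ≤ (N + 1 : ℕ) := by push_cast; linarith [abs_add_le k 1, abs_one (α := ℤ)]
  have hwindow (i : ℤ) :
      ∫ t in (i : ℝ)..(i : ℝ) + 1, dist (γ₁ (t + s)) (γ₂ (t + s)) ≤ a (i + k) + a (i + (k + 1)) := by
    rw [intervalIntegral.integral_comp_add_right (fun t => dist (γ₁ t) (γ₂ t)) s, ha_def]
    dsimp only
    push_cast
    rw [← add_assoc, intervalIntegral.integral_add_adjacent_intervals
      ((h₁.dist h₂).intervalIntegrable _ _) ((h₁.dist h₂).intervalIntegrable _ _)]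
    exact intervalIntegral.integral_mono_interval (by linarith [Int.floor_le s]) (by linarith)
      (by linarith [Int.lt_floor_add_one s]) (.of_forall fun _ => dist_nonneg)
      ((h₁.dist h₂).intervalIntegrable _ _)
  have S₁ := summable_two_zpow_neg_abs_mul_comp_add ha hsum hk
  have S₂ := summable_two_zpow_neg_abs_mul_comp_add ha hsum hk'
  calc rho (fun t => γ₁ (t + s)) (fun t => γ₂ (t + s))
      ≤ ∑' i, (2 : ℝ) ^ (-|i|) * (a (i + k) + a (i + (k + 1))) := by
        refine Summable.tsum_le_tsum (fun i => ?_) (summable_rho _ _)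
          (by simpa only [mul_add] using S₁.add S₂)
        exact mul_le_mul_of_nonneg_left (hwindow i) (by positivity)
    _ = ∑' i, (2 : ℝ) ^ (-|i|) * a (i + k) + ∑' i, (2 : ℝ) ^ (-|i|) * a (i + (k + 1)) := by
        simp only [mul_add]
        exact S₁.tsum_add S₂
    _ ≤ 2 ^ N * rho γ₁ γ₂ + 2 ^ (N + 1) * rho γ₁ γ₂ :=
        add_le_add (tsum_two_zpow_neg_abs_mul_comp_add_le ha hsum hk)
          (tsum_two_zpow_neg_abs_mul_comp_add_le ha hsum hk')
    _ ≤ 2 ^ (N + 2) * rho γ₁ γ₂ := by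
        have := rho_nonneg γ₁ γ₂
        have : (0 : ℝ) ≤ 2 ^ N := by positivity
        rw [pow_succ, pow_succ, pow_succ]
        nlinarith

end BoundedCurves

namespace LipschitzCurve

variable {M : Type*} [PseudoMetricSpace M] {L : ℝ} {γ : ℝ → M}

lemma continuous (h : LipschitzCurve L γ) : Continuous γ :=
  (LipschitzWith.of_dist_le_mul (K := L.toNNReal) fun s t => by
    rw [Real.coe_toNNReal', Real.dist_eq]
    exact (h s t).trans (mul_le_mul_of_nonneg_right (le_max_left _ _) (abs_nonneg _))).continuous

lemma rho_comp_add_right_le_mul_abs_sub (h : LipschitzCurve L γ) (s s' : ℝ) :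
    rho (fun t => γ (t + s)) (fun t => γ (t + s')) ≤
      L * |s - s'| * ∑' i : ℤ, (2 : ℝ) ^ (-|i|) :=
  rho_le_of_forall_dist_le fun t => by simpa using h (t + s) (t + s')

end LipschitzCurve

theorem reparametrization_continuous_general {M : Type*} [MetricSpace M] [CompactSpace M]
    (L : ℝ) (S : Set (ℝ → M)) (hlipS : ∀ γ ∈ S, LipschitzCurve L γ)
    (τ : (ℝ → M) → ℝ)
    (hτ : ∀ γ ∈ S, ∀ ε > (0 : ℝ), ∃ δ > (0 : ℝ), ∀ γ' ∈ S,
      rho γ γ' < δ → |τ γ - τ γ'| < ε)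
    (γn : ℕ → ℝ → M) (hγn : ∀ n, γn n ∈ S) (γ : ℝ → M) (hγ : γ ∈ S)
    (hconv : Filter.Tendsto (fun n => rho (γn n) γ) Filter.atTop (nhds 0)) :
    Filter.Tendsto
      (fun n => rho (fun t => γn n (t + τ (γn n))) (fun t => γ (t + τ γ)))
      Filter.atTop (nhds 0) := by
  have hτconv : Tendsto (fun n => τ (γn n)) atTop (nhds (τ γ)) := by
    refine Metric.tendsto_atTop.2 fun ε hε => ?_
    obtain ⟨δ, hδ, hτδ⟩ := hτ γ hγ ε hε
    obtain ⟨n₀, hn₀⟩ := eventually_atTop.1 (hconv.eventually (gt_mem_nhds hδ))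
    refine ⟨n₀, fun n hn => ?_⟩
    rw [Real.dist_eq, abs_sub_comm]
    exact hτδ _ (hγn n) (rho_comm γ (γn n) ▸ hn₀ n hn)
  obtain ⟨N, hN⟩ := exists_nat_gt |τ γ|
  have hbounded : ∀ᶠ n in atTop, |τ (γn n)| ≤ N :=
    (hτconv.abs.eventually (gt_mem_nhds hN)).mono fun _ => le_of_lt
  have hγc := (hlipS γ hγ).continuous
  set W := ∑' i : ℤ, (2 : ℝ) ^ (-|i|)
  refine squeeze_zero' (Eventually.of_forall fun n => rho_nonneg _ _)
    (g := fun n => 2 ^ (N + 2) * rho (γn n) γ + L * |τ (γn n) - τ γ| * W)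
    (hbounded.mono fun n hn => ?_) ?_
  · have hγnc := (hlipS _ (hγn n)).continuous
    exact (rho_triangle (hγnc.comp (continuous_add_const _)) (hγc.comp (continuous_add_const _))
      (hγc.comp (continuous_add_const _))).trans (add_le_add (rho_comp_add_right_le hγnc hγc hn)
        ((hlipS γ hγ).rho_comp_add_right_le_mul_abs_sub _ _))
  · simpa using (hconv.const_mul _).add (((hτconv.sub_const (τ γ)).abs.const_mul L).mul_const W)

/-- Let `S` be a set of `L`-Lipschitz curves into a compact metric
space, and let `τ : S → ℝ` be continuous with respect to `ρ`. Then the reparametrization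
map `P(γ)(t) = γ(t + τ(γ))` is continuous on `(S, ρ)`: if `γₙ → γ` in `(S, ρ)` then
`ρ(P(γₙ), P(γ)) → 0`. -/
theorem reparametrization_continuous {M : Type*} [MetricSpace M] [CompactSpace M]
    (L : ℝ) (hL : 0 < L) (S : Set (ℝ → M)) (hlipS : ∀ γ ∈ S, LipschitzCurve L γ)
    (τ : (ℝ → M) → ℝ)
    (hτ : ∀ γ ∈ S, ∀ ε > (0 : ℝ), ∃ δ > (0 : ℝ), ∀ γ' ∈ S,
      rho γ γ' < δ → |τ γ - τ γ'| < ε)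
    (γn : ℕ → ℝ → M) (hγn : ∀ n, γn n ∈ S) (γ : ℝ → M) (hγ : γ ∈ S)
    (hconv : Filter.Tendsto (fun n => rho (γn n) γ) Filter.atTop (nhds 0)) :
    Filter.Tendsto
      (fun n => rho (fun t => γn n (t + τ (γn n))) (fun t => γ (t + τ γ)))
      Filter.atTop (nhds 0) :=
  reparametrization_continuous_general L S hlipS τ hτ γn hγn γ hγ hconv
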